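/- The function h(x) = sign(x)·( (1/√2)·arcsin( (3(1−√(1−x²))−2)/(√(1−x²)+1) ) + π/2^{3/2} ) is strictly increasing on [−1,1], is an odd function, and maps [−1,1] onto [−π/√2, π/√2]. -/

import Mathlib

/-
With `s = √(1 - x²)`, the argument of `arcsin` is `(1 - 3s)/(1 + s) = 4/(1 + s) - 3`, which decreases
from `1` to `-1` as `s` runs over `[0, 1]`. As `x` runs over `[0, 1]`, `s` decreases from `1` to `0`,
so the unsigned part `hAbs` of `h` increases strictly from `hAbs 0 = -π/2^{3/2} + π/2^{3/2} = 0` to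
`hAbs 1 = π/√2`. Since `hAbs` is even and vanishes at `0`, `h = sign · hAbs` is its odd extension from
`[0, 1]`, and oddness transports monotonicity and the image from `[0, 1]` to `[-1, 1]`.
-/

noncomputable def h (x : ℝ) : ℝ :=
  Real.sign x * ((1 / Real.sqrt 2) *
      Real.arcsin ((3 * (1 - Real.sqrt (1 - x ^ 2)) - 2) / (Real.sqrt (1 - x ^ 2) + 1))
    + Real.pi / (2 : ℝ) ^ ((3 : ℝ) / 2))

open Set

namespace Function.Odd

variable {α β : Type*} [AddCommGroup α] [LinearOrder α] [IsOrderedAddMonoid α]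
  [AddCommGroup β] [LinearOrder β] [IsOrderedAddMonoid β] {f : α → β} {a : α}

lemma strictMonoOn_Icc_neg (hf : f.Odd) (ha : 0 ≤ a) (hmono : StrictMonoOn f (Icc 0 a)) :
    StrictMonoOn f (Icc (-a) a) := by
  have hneg : StrictMonoOn f (Icc (-a) 0) := by
    intro x hx y hy hxy
    have := hmono ⟨neg_nonneg.2 hy.2, neg_le.1 hy.1⟩ ⟨neg_nonneg.2 hx.2, neg_le.1 hx.1⟩
      (neg_lt_neg hxy)
    rwa [hf, hf, neg_lt_neg_iff] at this
  rw [← Icc_union_Icc_eq_Icc (neg_nonpos.2 ha) ha]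
  exact hneg.union hmono (isGreatest_Icc (neg_nonpos.2 ha)) (isLeast_Icc ha)

lemma image_Icc_neg (hf : f.Odd) (ha : 0 ≤ a) {b : β} (himage : f '' Icc 0 a = Icc 0 b) :
    f '' Icc (-a) a = Icc (-b) b := by
  have hb : 0 ≤ b := by
    obtain ⟨h0, hb⟩ := himage ▸ mem_image_of_mem f (left_mem_Icc.2 ha)
    exact h0.trans hb
  have hneg : f '' Icc (-a) 0 = Icc (-b) 0 := by
    rw [← neg_zero, ← neg_Icc, ← image_neg_eq_neg, ← image_comp,
      show f ∘ (fun x => -x) = (fun y => -y) ∘ f from funext hf, image_comp, himage,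
      image_neg_eq_neg, neg_Icc, neg_zero]
  rw [← Icc_union_Icc_eq_Icc (neg_nonpos.2 ha) ha, image_union, hneg, himage,
    Icc_union_Icc_eq_Icc (neg_nonpos.2 hb) hb]

end Function.Odd

noncomputable def arcsinArg (s : ℝ) : ℝ := (3 * (1 - s) - 2) / (s + 1)

noncomputable def hAbs (x : ℝ) : ℝ :=
  (1 / Real.sqrt 2) * Real.arcsin (arcsinArg (Real.sqrt (1 - x ^ 2)))
    + Real.pi / (2 : ℝ) ^ ((3 : ℝ) / 2)

lemma h_eq_sign_mul_hAbs : h = Real.sign * hAbs := rfl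

lemma hAbs_even : hAbs.Even := fun x => by simp only [hAbs, neg_sq]

lemma h_odd : h.Odd := by
  rw [h_eq_sign_mul_hAbs]
  exact Function.Odd.mul_even (fun _ => Real.sign_neg) hAbs_even

lemma two_rpow_three_halves : (2 : ℝ) ^ ((3 : ℝ) / 2) = 2 * Real.sqrt 2 := by
  rw [show (3 : ℝ) / 2 = 1 + 1 / 2 by norm_num, Real.rpow_add two_pos, Real.rpow_one,
    ← Real.sqrt_eq_rpow]

lemma hAbs_zero : hAbs 0 = 0 := by
  have : Real.sqrt 2 ≠ 0 := by positivity
  simp only [hAbs, arcsinArg, two_rpow_three_halves]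
  norm_num [Real.arcsin_neg_one]
  field_simp
  ring

lemma hAbs_one : hAbs 1 = Real.pi / Real.sqrt 2 := by
  have : Real.sqrt 2 ≠ 0 := by positivity
  simp only [hAbs, arcsinArg, two_rpow_three_halves]
  norm_num [Real.arcsin_one]
  field_simp
  ring

lemma h_eq_hAbs {x : ℝ} (hx : 0 ≤ x) : h x = hAbs x := by
  rcases hx.eq_or_lt with rfl | hx
  · rw [h_eq_sign_mul_hAbs, Pi.mul_apply, hAbs_zero, mul_zero]
  · rw [h_eq_sign_mul_hAbs, Pi.mul_apply, Real.sign_of_pos hx, one_mul]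

lemma continuous_hAbs : Continuous hAbs := by
  have hden : ∀ x : ℝ, Real.sqrt (1 - x ^ 2) + 1 ≠ 0 := fun x => by positivity
  unfold hAbs arcsinArg
  exact (continuous_const.mul (Real.continuous_arcsin.comp
    ((by fun_prop : Continuous _).div (by fun_prop) hden))).add continuous_const

lemma sqrt_one_sub_sq_strictAntiOn : StrictAntiOn (fun x : ℝ => Real.sqrt (1 - x ^ 2)) (Icc 0 1) :=
  fun x hx y hy hxy => Real.sqrt_lt_sqrt (by nlinarith [hy.1, hy.2]) (by nlinarith [hx.1])

lemma sqrt_one_sub_sq_mem_Icc (x : ℝ) : Real.sqrt (1 - x ^ 2) ∈ Icc (0 : ℝ) 1 :=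
  ⟨Real.sqrt_nonneg _, Real.sqrt_le_one.2 (by nlinarith)⟩

lemma arcsinArg_strictAntiOn : StrictAntiOn arcsinArg (Ici 0) := by
  intro s hs t ht hst
  simp only [arcsinArg, mem_Ici] at hs ht ⊢
  rw [div_lt_div_iff₀ (by linarith) (by linarith)]
  nlinarith

lemma arcsinArg_mem_Icc {s : ℝ} (hs : s ∈ Icc (0 : ℝ) 1) : arcsinArg s ∈ Icc (-1 : ℝ) 1 := by
  obtain ⟨h0, h1⟩ := hs
  unfold arcsinArg
  constructor
  · rw [le_div_iff₀ (by linarith)]; linarith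
  · rw [div_le_one (by linarith)]; linarith

lemma hAbs_strictMonoOn : StrictMonoOn hAbs (Icc 0 1) := by
  intro x hx y hy hxy
  have hs := sqrt_one_sub_sq_strictAntiOn hx hy hxy
  have hsx := sqrt_one_sub_sq_mem_Icc x
  have hsy := sqrt_one_sub_sq_mem_Icc y
  have harg := arcsinArg_strictAntiOn hsy.1 hsx.1 hs
  have harcsin := Real.strictMonoOn_arcsin (arcsinArg_mem_Icc hsx) (arcsinArg_mem_Icc hsy) harg
  unfold hAbs
  gcongr

lemma image_hAbs_Icc : hAbs '' Icc 0 1 = Icc 0 (Real.pi / Real.sqrt 2) := by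
  rw [continuous_hAbs.continuousOn.image_Icc_of_monotoneOn zero_le_one
    hAbs_strictMonoOn.monotoneOn, hAbs_zero, hAbs_one]

theorem stmt2 :
    StrictMonoOn h (Set.Icc (-1 : ℝ) 1)
    ∧ (∀ x : ℝ, h (-x) = -h x)
    ∧ h '' Set.Icc (-1 : ℝ) 1 = Set.Icc (-(Real.pi / Real.sqrt 2)) (Real.pi / Real.sqrt 2) := by
  have h_eqOn : EqOn h hAbs (Icc 0 1) := fun x hx => h_eq_hAbs hx.1
  refine ⟨h_odd.strictMonoOn_Icc_neg zero_le_one ?_, h_odd, h_odd.image_Icc_neg zero_le_one ?_⟩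
  · exact hAbs_strictMonoOn.congr h_eqOn.symm
  · rw [h_eqOn.image_eq, image_hAbs_Icc]
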